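/- arXiv:2302.00161 — 7 statements merged into one kernel-verified Lean document; each statement's English description precedes it below -/
import Mathlib

section
/- Let μ, γ, φ, β, Cs, Ci, Cr be positive real numbers and suppose (s, i, r) ∈ ℝ³ satisfies s + i + r = 1, i > 0, s·Cs + i·Ci + r·Cr > 0, and the equilibrium equations 0 = -g·β·s·i + μ - μ·s, 0 = g·β·s·i + φ·r·i - (γ + μ)·i, 0 = γ·i - φ·r·i - μ·r, where g = Cs·Ci/(s·Cs + i·Ci + r·Cr). Set κ = Ci/Cs, θ = Cr/Cs, Rμ = μ/(μ + γ), Rφ = φ/(μ + γ), R₀ = β·Ci/(γ + μ). Then r = γ·i/(φ·i + μ), s = 1 - i - γ·i/(φ·i + μ), and i satisfies the cubic equation a₃·i³ + a₂·i² + a₁·i + a₀ = 0, where a₃ = Rφ²·R₀ - Rμ·Rφ²·(1-κ), a₂ = Rφ·[R₀·(1-Rφ) + Rμ·(R₀+Rφ) - Rμ·(1-Rμ)·(1-θ) - Rμ·(1+Rμ)·(1-κ)], a₁ = Rμ·[R₀·(1-Rφ) + Rφ·(1-R₀) - (1-Rμ)·(1-θ) + Rμ·Rφ - Rμ·(1-κ)],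 a₀ = Rμ²·(1-R₀). -/
/-!
Rescale by `Cs` and `μ + γ`. The recovered equation becomes `r·p = (1 - Rμ)·i` with
`p = Rφ·i + Rμ`, and the infected equation, divided by `i`, becomes the balance
`R₀·s = (1 - Rφ·r)·(s + κ·i + θ·r)`. Eliminating `s = 1 - i - r` and multiplying the balance by
`p²` turns it into a polynomial in `i` and `r·p`; replacing `r·p` by `(1 - Rμ)·i` gives the cubic.
-/

def endemicCubic (κ θ Rμ Rφ R₀ x : ℝ) : ℝ :=
  (Rφ ^ 2 * R₀ - Rμ * Rφ ^ 2 * (1 - κ)) * x ^ 3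
    + Rφ * (R₀ * (1 - Rφ) + Rμ * (R₀ + Rφ)
      - Rμ * (1 - Rμ) * (1 - θ) - Rμ * (1 + Rμ) * (1 - κ)) * x ^ 2
    + Rμ * (R₀ * (1 - Rφ) + Rφ * (1 - R₀)
      - (1 - Rμ) * (1 - θ) + Rμ * Rφ - Rμ * (1 - κ)) * x
    + Rμ ^ 2 * (1 - R₀)

theorem endemicCubic_eq_zero {κ θ Rμ Rφ R₀ s i r : ℝ} (hsum : s + i + r = 1)
    (hr : r * (Rφ * i + Rμ) = (1 - Rμ) * i)
    (hbal : R₀ * s = (1 - Rφ * r) * (s + κ * i + θ * r)) :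
    endemicCubic κ θ Rμ Rφ R₀ i = 0 := by
  set p := Rφ * i + Rμ
  obtain rfl : s = 1 - i - r := by linear_combination hsum
  calc endemicCubic κ θ Rμ Rφ R₀ i
      = (p - Rφ * ((1 - Rμ) * i)) * ((1 - i + κ * i) * p + (θ - 1) * ((1 - Rμ) * i))
        - R₀ * p * ((1 - i) * p - (1 - Rμ) * i) := by
        simp only [endemicCubic, p]; ring
    _ = (p - Rφ * (r * p)) * ((1 - i + κ * i) * p + (θ - 1) * (r * p))
        - R₀ * p * ((1 - i) * p - r * p) := by rw [hr]
    _ = p ^ 2 * ((1 - Rφ * r) * (1 - i - r + κ * i + θ * r) - R₀ * (1 - i - r)) := by ring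
    _ = 0 := by rw [hbal]; ring

theorem infection_balance {μ γ φ β Cs Ci Cr s i r g : ℝ} (hi : i ≠ 0)
    (hden : s * Cs + i * Ci + r * Cr ≠ 0) (hg : g = Cs * Ci / (s * Cs + i * Ci + r * Cr))
    (heq2 : 0 = g * β * s * i + φ * r * i - (γ + μ) * i) :
    Cs * Ci * β * s = (γ + μ - φ * r) * (s * Cs + i * Ci + r * Cr) := by
  have hforce : g * β * s = γ + μ - φ * r :=
    mul_right_cancel₀ hi (by linear_combination -heq2)
  rw [← hforce, hg, div_mul_eq_mul_div, div_mul_eq_mul_div, div_mul_cancel₀ _ hden]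

theorem scaled_infection_balance {μ γ φ β Cs Ci Cr s i r g : ℝ} (hμγ : μ + γ ≠ 0)
    (hCs : Cs ≠ 0) (hi : i ≠ 0) (hden : s * Cs + i * Ci + r * Cr ≠ 0)
    (hg : g = Cs * Ci / (s * Cs + i * Ci + r * Cr))
    (heq2 : 0 = g * β * s * i + φ * r * i - (γ + μ) * i) :
    β * Ci / (γ + μ) * s = (1 - φ / (μ + γ) * r) * (s + Ci / Cs * i + Cr / Cs * r) := by
  have hbal := infection_balance hi hden hg heq2
  rw [add_comm γ μ] at hbal ⊢
  field_simp
  linear_combination hbal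

theorem scaled_recovered_balance {μ γ φ i r : ℝ} (hμγ : μ + γ ≠ 0)
    (heq3 : 0 = γ * i - φ * r * i - μ * r) :
    r * (φ / (μ + γ) * i + μ / (μ + γ)) = (1 - μ / (μ + γ)) * i := by
  field_simp
  linear_combination heq3

theorem endemic_equilibrium_cubic_general
    (μ γ φ β Cs Ci Cr : ℝ)
    (hμ : 0 < μ) (hγ : 0 < γ) (hφ : 0 < φ)
    (hCs : 0 < Cs)
    (s i r : ℝ) (hsum : s + i + r = 1) (hi : 0 < i)
    (hden : 0 < s * Cs + i * Ci + r * Cr)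
    (g : ℝ) (hg : g = Cs * Ci / (s * Cs + i * Ci + r * Cr))
    (heq2 : 0 = g * β * s * i + φ * r * i - (γ + μ) * i)
    (heq3 : 0 = γ * i - φ * r * i - μ * r)
    (κ θ Rμ Rφ R₀ : ℝ)
    (hκ : κ = Ci / Cs) (hθ : θ = Cr / Cs)
    (hRμ : Rμ = μ / (μ + γ)) (hRφ : Rφ = φ / (μ + γ))
    (hR₀ : R₀ = β * Ci / (γ + μ))
    (a₀ a₁ a₂ a₃ : ℝ)
    (ha₃ : a₃ = Rφ ^ 2 * R₀ - Rμ * Rφ ^ 2 * (1 - κ))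
    (ha₂ : a₂ = Rφ * (R₀ * (1 - Rφ) + Rμ * (R₀ + Rφ)
      - Rμ * (1 - Rμ) * (1 - θ) - Rμ * (1 + Rμ) * (1 - κ)))
    (ha₁ : a₁ = Rμ * (R₀ * (1 - Rφ) + Rφ * (1 - R₀)
      - (1 - Rμ) * (1 - θ) + Rμ * Rφ - Rμ * (1 - κ)))
    (ha₀ : a₀ = Rμ ^ 2 * (1 - R₀)) :
    r = γ * i / (φ * i + μ) ∧
      s = 1 - i - γ * i / (φ * i + μ) ∧
      a₃ * i ^ 3 + a₂ * i ^ 2 + a₁ * i + a₀ = 0 := by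
  have hr : r = γ * i / (φ * i + μ) :=
    eq_div_of_mul_eq (by positivity) (by linear_combination heq3)
  refine ⟨hr, by rw [← hr]; linear_combination hsum, ?_⟩
  have hμγ : μ + γ ≠ 0 := by positivity
  subst ha₀ ha₁ ha₂ ha₃ hκ hθ hRμ hRφ hR₀
  exact endemicCubic_eq_zero hsum (scaled_recovered_balance hμγ heq3)
    (scaled_infection_balance hμγ hCs.ne' hi.ne' hden.ne' hg heq2)

/-- At an endemic equilibrium `(s,i,r)` of the rescaled SIR model with
nonlinear relapse and constant contact rates, the recovered and susceptible
components are determined by `i`, and `i` satisfies the cubic equation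
`a₃·i³ + a₂·i² + a₁·i + a₀ = 0` with the stated coefficients. -/
theorem endemic_equilibrium_cubic
    (μ γ φ β Cs Ci Cr : ℝ)
    (hμ : 0 < μ) (hγ : 0 < γ) (hφ : 0 < φ) (hβ : 0 < β)
    (hCs : 0 < Cs) (hCi : 0 < Ci) (hCr : 0 < Cr)
    (s i r : ℝ) (hsum : s + i + r = 1) (hi : 0 < i)
    (hden : 0 < s * Cs + i * Ci + r * Cr)
    (g : ℝ) (hg : g = Cs * Ci / (s * Cs + i * Ci + r * Cr))
    (heq1 : 0 = -(g * β * s * i) + μ - μ * s)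
    (heq2 : 0 = g * β * s * i + φ * r * i - (γ + μ) * i)
    (heq3 : 0 = γ * i - φ * r * i - μ * r)
    (κ θ Rμ Rφ R₀ : ℝ)
    (hκ : κ = Ci / Cs) (hθ : θ = Cr / Cs)
    (hRμ : Rμ = μ / (μ + γ)) (hRφ : Rφ = φ / (μ + γ))
    (hR₀ : R₀ = β * Ci / (γ + μ))
    (a₀ a₁ a₂ a₃ : ℝ)
    (ha₃ : a₃ = Rφ ^ 2 * R₀ - Rμ * Rφ ^ 2 * (1 - κ))
    (ha₂ : a₂ = Rφ * (R₀ * (1 - Rφ) + Rμ * (R₀ + Rφ)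
      - Rμ * (1 - Rμ) * (1 - θ) - Rμ * (1 + Rμ) * (1 - κ)))
    (ha₁ : a₁ = Rμ * (R₀ * (1 - Rφ) + Rφ * (1 - R₀)
      - (1 - Rμ) * (1 - θ) + Rμ * Rφ - Rμ * (1 - κ)))
    (ha₀ : a₀ = Rμ ^ 2 * (1 - R₀)) :
    r = γ * i / (φ * i + μ) ∧
      s = 1 - i - γ * i / (φ * i + μ) ∧
      a₃ * i ^ 3 + a₂ * i ^ 2 + a₁ * i + a₀ = 0 :=
  endemic_equilibrium_cubic_general μ γ φ β Cs Ci Cr hμ hγ hφ hCs s i r hsum hi hden g hg heq2 heq3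
    κ θ Rμ Rφ R₀ hκ hθ hRμ hRφ hR₀ a₀ a₁ a₂ a₃ ha₃ ha₂ ha₁ ha₀
end

section
/- Let p be a real polynomial of degree n ≥ 1 that has n distinct real roots (i.e., p splits over ℝ and its root multiset has n distinct elements). If c ∈ ℝ satisfies p'(c) = 0, then p(c)·p''(c) < 0, where p' and p'' denote the first and second derivatives of p. -/
open Polynomial

/-!
If `p = a ∏ᵢ (X - rᵢ)`, then `p'² - p p'' = a² ∑ᵢ (∏_{j ≠ i} (X - rⱼ))²`: this is the identity
`-(p'/p)' = ∑ᵢ 1 / (X - rᵢ)²` with denominators cleared. When the roots are distinct, the summands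
cannot all vanish at a point `c` (if `c = rᵢ`, the `i`-th one does not), so `p(c) p''(c) < p'(c)²`.
At a critical point the right-hand side is `0`.
-/

namespace Polynomial

theorem derivative_sq_sub_mul_derivative_derivative_multiset_prod_X_sub_C
    {R : Type*} [CommRing R] [DecidableEq R] (s : Multiset R) :
    derivative (s.map (X - C ·)).prod ^ 2 -
        (s.map (X - C ·)).prod * derivative (derivative (s.map (X - C ·)).prod) =
      (s.map fun r ↦ ((s.erase r).map (X - C ·)).prod ^ 2).sum := by
  induction s using Multiset.induction_on with
  | empty => simp
  | cons a s ih =>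
    have hrhs : ((a ::ₘ s).map fun r ↦ (((a ::ₘ s).erase r).map (X - C ·)).prod ^ 2).sum =
        (s.map (X - C ·)).prod ^ 2 +
          (X - C a) ^ 2 * (s.map fun r ↦ ((s.erase r).map (X - C ·)).prod ^ 2).sum := by
      rw [Multiset.map_cons, Multiset.sum_cons, Multiset.erase_cons_head,
        ← Multiset.sum_map_mul_left]
      congr 2
      refine Multiset.map_congr rfl fun r hr ↦ ?_
      rw [Multiset.erase_cons_tail_of_mem hr, Multiset.map_cons, Multiset.prod_cons, mul_pow]
    rw [hrhs, ← ih, Multiset.map_cons, Multiset.prod_cons]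
    simp only [derivative_mul, derivative_add, derivative_X_sub_C, one_mul]
    ring

variable {K : Type*} [Field K] [LinearOrder K] [IsStrictOrderedRing K]

theorem eval_sum_sq_prod_erase_X_sub_C_pos {s : Multiset K} (hs : s.Nodup) (hne : s ≠ 0) (c : K) :
    0 < eval c (s.map fun r ↦ ((s.erase r).map (X - C ·)).prod ^ 2).sum := by
  obtain ⟨r, hr, hcr⟩ : ∃ r ∈ s, c ∉ s.erase r := by
    by_cases hc : c ∈ s
    · exact ⟨c, hc, hs.notMem_erase⟩
    · obtain ⟨r, hr⟩ := Multiset.exists_mem_of_ne_zero hne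
      exact ⟨r, hr, fun h ↦ hc (Multiset.mem_of_mem_erase h)⟩
  obtain ⟨t, rfl⟩ := Multiset.exists_cons_of_mem hr
  have hprod : eval c (((r ::ₘ t).erase r).map (X - C ·)).prod ≠ 0 := by
    rw [eval_multiset_prod, Multiset.map_map]
    refine Multiset.prod_ne_zero fun h ↦ ?_
    obtain ⟨j, hj, hcj⟩ := Multiset.mem_map.mp h
    simp only [Function.comp_apply, eval_sub, eval_X, eval_C, sub_eq_zero] at hcj
    exact hcr (hcj ▸ hj)
  rw [Multiset.map_cons, Multiset.sum_cons, eval_add, eval_multisetSum, Multiset.map_map]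
  refine add_pos_of_pos_of_nonneg (by simpa only [eval_pow] using sq_pos_of_ne_zero hprod)
    (Multiset.sum_nonneg fun x hx ↦ ?_)
  obtain ⟨j, -, rfl⟩ := Multiset.mem_map.mp hx
  simpa using sq_nonneg _

theorem Splits.eval_mul_eval_derivative_derivative_lt_sq {p : K[X]} (hsplit : p.Splits)
    (hnodup : p.roots.Nodup) (hdeg : 0 < p.natDegree) (c : K) :
    p.eval c * (derivative (derivative p)).eval c < (derivative p).eval c ^ 2 := by
  have hroots : p.roots ≠ 0 := by
    rw [← Multiset.card_pos, ← hsplit.natDegree_eq_card_roots]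
    exact hdeg
  have hlc : p.leadingCoeff ≠ 0 := leadingCoeff_ne_zero.mpr (ne_zero_of_natDegree_gt hdeg)
  have hlaguerre : derivative p ^ 2 - p * derivative (derivative p) = C (p.leadingCoeff ^ 2) *
      (p.roots.map fun r ↦ ((p.roots.erase r).map (X - C ·)).prod ^ 2).sum := by
    rw [← derivative_sq_sub_mul_derivative_derivative_multiset_prod_X_sub_C]
    conv_lhs => rw [hsplit.eq_prod_roots]
    simp only [derivative_C_mul, C_pow]
    ring
  rw [← sub_pos, ← eval_pow, ← eval_mul, ← eval_sub, hlaguerre, eval_mul, eval_C]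
  exact mul_pos (sq_pos_of_ne_zero hlc) (eval_sum_sq_prod_erase_X_sub_C_pos hnodup hroots c)

end Polynomial

/-- If `p` is a real polynomial of degree `n ≥ 1` with `n` distinct real roots
and `c` is a critical point of `p` (i.e. `p'(c) = 0`), then
`p(c) · p''(c) < 0`. -/
theorem eval_mul_eval_second_deriv_neg_of_distinct_roots
    (p : Polynomial ℝ) (n : ℕ) (hn : 1 ≤ n)
    (hdeg : p.natDegree = n)
    (hsplit : p.Splits)
    (hdist : p.roots.toFinset.card = n)
    (c : ℝ) (hc : (Polynomial.derivative p).eval c = 0) :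
    p.eval c * ((Polynomial.derivative (Polynomial.derivative p)).eval c) < 0 := by
  have hnodup : p.roots.Nodup := by
    rw [← Multiset.toFinset_card_eq_card_iff_nodup, hdist, ← hsplit.natDegree_eq_card_roots, hdeg]
  have hlt := hsplit.eval_mul_eval_derivative_derivative_lt_sq hnodup (hdeg ▸ hn) c
  rwa [hc, zero_pow two_ne_zero] at hlt
end

section
/- Let p be a real polynomial of degree n that has n distinct real roots, and form the sequence of higher derivatives p⁽⁰⁾ = p, p⁽¹⁾ = p', ..., p⁽ⁿ⁾. Then this sequence is a Sturm chain with respect to any interval: for every index i with 0 < i < n and every real α with p⁽ⁱ⁾(α) = 0, one has p⁽ⁱ⁻¹⁾(α)·p⁽ⁱ⁺¹⁾(α) < 0. -/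
/-!
Let `q = c ∏ (X - r)` have distinct real roots `r`. Peeling off one factor, `Q = (X - a) R`, gives
`Q'² - Q Q'' = R² + (X - a)² (R'² - R R'')`, so by induction `q'² - q q''` is positive everywhere
(at `x = a` the first term survives because `a` is not a root of `R`). At a zero of `q'` this says
`q q'' < 0`. By Rolle the derivatives of `p` keep all their roots real and simple, so this applies
to `q = p⁽ⁱ⁻¹⁾`.
-/

open Polynomial Finset

namespace Polynomial

theorem card_roots_toFinset_sub_le_iterate_derivative (p : ℝ[X]) (k : ℕ) :
    #p.roots.toFinset - k ≤ #(derivative^[k] p).roots.toFinset := by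
  induction k with
  | zero => simp
  | succ k ih =>
    rw [Function.iterate_succ_apply']
    have := card_roots_toFinset_le_derivative (derivative^[k] p)
    omega

theorem sq_eval_derivative_sub_mul_pos_of_prod_X_sub_C {s : Finset ℝ} (hs : s.Nonempty) (x : ℝ) :
    0 < (derivative (∏ r ∈ s, (X - C r))).eval x ^ 2 -
      (∏ r ∈ s, (X - C r)).eval x * (derivative (derivative (∏ r ∈ s, (X - C r)))).eval x := by
  induction hs using Finset.Nonempty.cons_induction with
  | singleton a => simp
  | cons a s ha hs ih =>
    set R := ∏ r ∈ s, (X - C r)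
    have hpeel : (derivative ((X - C a) * R)).eval x ^ 2 -
          ((X - C a) * R).eval x * (derivative (derivative ((X - C a) * R))).eval x =
        R.eval x ^ 2 + (x - a) ^ 2 *
          ((derivative R).eval x ^ 2 - R.eval x * (derivative (derivative R)).eval x) := by
      simp only [derivative_mul, derivative_add, derivative_X_sub_C, one_mul, eval_add, eval_mul,
        eval_sub, eval_X, eval_C]
      ring
    rw [prod_cons, hpeel]
    rcases eq_or_ne x a with rfl | hxa
    · have hR : R.eval x ≠ 0 := by
        rw [eval_prod, prod_ne_zero_iff]
        rintro r hr
        rw [eval_sub, eval_X, eval_C, sub_ne_zero]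
        rintro rfl
        exact ha hr
      rw [sub_self, zero_pow two_ne_zero, zero_mul, add_zero]
      positivity
    · exact add_pos_of_nonneg_of_pos (sq_nonneg _) (mul_pos (by positivity) ih)

theorem sq_eval_derivative_sub_mul_pos {q : ℝ[X]} (hq₀ : 0 < q.natDegree)
    (hq : q.natDegree ≤ #q.roots.toFinset) (x : ℝ) :
    0 < (derivative q).eval x ^ 2 - q.eval x * (derivative (derivative q)).eval x := by
  have hle := Multiset.toFinset_card_le q.roots
  have hcard : Multiset.card q.roots = q.natDegree := le_antisymm (card_roots' q) (hq.trans hle)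
  have hnodup : q.roots.Nodup :=
    Multiset.toFinset_card_eq_card_iff_nodup.1 (le_antisymm hle (hcard ▸ hq))
  set s : Finset ℝ := ⟨q.roots, hnodup⟩
  have hs : s.Nonempty := card_pos.1 (show 0 < Multiset.card q.roots by omega)
  have hc : q.leadingCoeff ≠ 0 := leadingCoeff_ne_zero.2 (ne_zero_of_natDegree_gt hq₀)
  have hfactor : q = C q.leadingCoeff * ∏ r ∈ s, (X - C r) :=
    (C_leadingCoeff_mul_prod_multiset_X_sub_C hcard).symm
  rw [hfactor]
  simp only [derivative_C_mul, eval_mul, eval_C]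
  calc 0 < q.leadingCoeff ^ 2 * _ :=
        mul_pos (by positivity) (sq_eval_derivative_sub_mul_pos_of_prod_X_sub_C hs x)
    _ = _ := by ring

end Polynomial

theorem derivatives_form_sturm_chain_general
    (p : Polynomial ℝ) (n : ℕ)
    (hdeg : p.natDegree = n)
    (hdist : p.roots.toFinset.card = n) :
    ∀ i : ℕ, 0 < i → i < n → ∀ α : ℝ,
      ((Polynomial.derivative^[i] p).eval α = 0) →
      ((Polynomial.derivative^[i - 1] p).eval α) *
        ((Polynomial.derivative^[i + 1] p).eval α) < 0 := by
  intro i _ hin α hα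
  obtain ⟨k, rfl⟩ : ∃ k, i = k + 1 := ⟨i - 1, by omega⟩
  set q := derivative^[k] p
  have hcard : n - k ≤ #q.roots.toFinset :=
    hdist ▸ card_roots_toFinset_sub_le_iterate_derivative p k
  have hdeg_q : q.natDegree ≤ n - k := hdeg ▸ natDegree_iterate_derivative p k
  have hroots_q := (Multiset.toFinset_card_le q.roots).trans (card_roots' q)
  have hpos := sq_eval_derivative_sub_mul_pos (q := q) (by omega) (by omega) α
  rw [Function.iterate_succ_apply'] at hα
  rw [hα, zero_pow two_ne_zero, zero_sub, neg_pos] at hpos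
  rwa [Nat.add_sub_cancel, Function.iterate_succ_apply', Function.iterate_succ_apply']

/-- If `p` is a real polynomial of degree `n` with `n` distinct real roots,
then the sequence of its higher derivatives `p, p', ..., p⁽ⁿ⁾` is a Sturm
chain with respect to any interval: whenever `0 < i < n` and `α` is a real
root of `p⁽ⁱ⁾`, one has `p⁽ⁱ⁻¹⁾(α) · p⁽ⁱ⁺¹⁾(α) < 0`. -/
theorem derivatives_form_sturm_chain
    (p : Polynomial ℝ) (n : ℕ)
    (hdeg : p.natDegree = n)
    (hsplit : p.Splits)
    (hdist : p.roots.toFinset.card = n) :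
    ∀ i : ℕ, 0 < i → i < n → ∀ α : ℝ,
      ((Polynomial.derivative^[i] p).eval α = 0) →
      ((Polynomial.derivative^[i - 1] p).eval α) *
        ((Polynomial.derivative^[i + 1] p).eval α) < 0 :=
  derivatives_form_sturm_chain_general p n hdeg hdist
end

section
/- Let Rμ ∈ (0,1) and Rφ > 0 be real numbers, and define C = Rφ²·Rμ, D = Rφ·(1-Rφ) + Rφ·Rμ, F = Rφ·Rμ·(1-Rμ), G = Rφ·Rμ·(1+Rμ), H = Rμ·(1-Rφ) - Rμ·Rφ, I = Rμ², J = Rμ·(1-Rμ). Then (G + H - I)·F > (C + D)·J if and only if Rφ > (1 + Rμ²)/(1 - Rμ)². -/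
/-- The key algebraic condition for the existence of the cubic bifurcation
region: `(G + H - I)·F > (C + D)·J` holds if and only if
`Rφ > (1 + Rμ²)/(1 - Rμ)²`. -/
theorem key_inequality_iff
    (Rμ Rφ : ℝ) (hRμ : Rμ ∈ Set.Ioo (0 : ℝ) 1) (hRφ : 0 < Rφ)
    (C D F G H I J : ℝ)
    (hC : C = Rφ ^ 2 * Rμ)
    (hD : D = Rφ * (1 - Rφ) + Rφ * Rμ)
    (hF : F = Rφ * Rμ * (1 - Rμ))
    (hG : G = Rφ * Rμ * (1 + Rμ))
    (hH : H = Rμ * (1 - Rφ) - Rμ * Rφ)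
    (hI : I = Rμ ^ 2)
    (hJ : J = Rμ * (1 - Rμ)) :
    (G + H - I) * F > (C + D) * J ↔ Rφ > (1 + Rμ ^ 2) / (1 - Rμ) ^ 2 := by
  obtain ⟨h0, h1⟩ := hRμ
  have hsq : (0:ℝ) < (1 - Rμ) ^ 2 := pow_pos (sub_pos.mpr h1) 2
  subst hC hD hF hG hH hI hJ
  rw [gt_iff_lt, gt_iff_lt, div_lt_iff₀ hsq]
  constructor <;> intro h <;>
    nlinarith [mul_pos (mul_pos h0 hRφ) (sub_pos.mpr h1), sq_nonneg Rμ, sq_nonneg (1-Rμ),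
      mul_pos h0 hRφ]
end

section
/- Let Rμ ∈ (0,1) and Rφ > 0 be real numbers satisfying Rφ·(1-Rμ)² > 1 + Rμ², and define A = Rφ², B = Rμ·Rφ², C = Rφ²·Rμ, D = Rφ·(1-Rφ) + Rφ·Rμ, E = Rφ·Rμ·(1+Rμ), F = Rφ·Rμ·(1-Rμ), G = Rφ·Rμ·(1+Rμ), H = Rμ·(1-Rφ) - Rμ·Rφ, I = Rμ², J = Rμ·(1-Rμ). For κ ∈ [0,1] set θ₁*(κ) = 1 - (C+D)/F + (E/F)·(1-κ), θ₂*(κ) = θ₁*(κ) + (B·(1-κ) - A)/F, and θ₃*(κ) = 1 - (G+H)/J + (I/J)·(1-κ). Then for every κ ∈ [0,1]: θ₂*(κ) < θ₁*(κ), θ₃*(κ) < θ₁*(κ), θ₁*(κ) > 0, and θ₃*(κ) > 0. -/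
/-- Ordering and positivity of the intersections `θ₁*, θ₂*, θ₃*` of the lines
`{a₂ = 0}`, `{a₂ + a₃ = 0}` and `{a₀ + a₁ = 0}` with the vertical line
`R₀ = 1` in the `(R₀, θ)`-plane, under the condition
`Rφ(1 - Rμ)² > 1 + Rμ²`. -/
theorem theta_intersections_order
    (Rμ Rφ : ℝ) (hRμ : Rμ ∈ Set.Ioo (0 : ℝ) 1) (hRφ : 0 < Rφ)
    (hineq : Rφ * (1 - Rμ) ^ 2 > 1 + Rμ ^ 2)
    (A B C D E F G H I J : ℝ)
    (hA : A = Rφ ^ 2)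
    (hB : B = Rμ * Rφ ^ 2)
    (hC : C = Rφ ^ 2 * Rμ)
    (hD : D = Rφ * (1 - Rφ) + Rφ * Rμ)
    (hE : E = Rφ * Rμ * (1 + Rμ))
    (hF : F = Rφ * Rμ * (1 - Rμ))
    (hG : G = Rφ * Rμ * (1 + Rμ))
    (hH : H = Rμ * (1 - Rφ) - Rμ * Rφ)
    (hI : I = Rμ ^ 2)
    (hJ : J = Rμ * (1 - Rμ))
    (θ₁ θ₂ θ₃ : ℝ → ℝ)
    (hθ₁ : ∀ κ, θ₁ κ = 1 - (C + D) / F + (E / F) * (1 - κ))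
    (hθ₂ : ∀ κ, θ₂ κ = θ₁ κ + (B * (1 - κ) - A) / F)
    (hθ₃ : ∀ κ, θ₃ κ = 1 - (G + H) / J + (I / J) * (1 - κ)) :
    ∀ κ ∈ Set.Icc (0 : ℝ) 1,
      θ₂ κ < θ₁ κ ∧ θ₃ κ < θ₁ κ ∧ 0 < θ₁ κ ∧ 0 < θ₃ κ := by
  obtain ⟨hμ0, hμ1⟩ := hRμ
  intro κ hκ
  obtain ⟨hκ0, hκ1⟩ := hκ
  have hμ1' : 0 < 1 - Rμ := by linarith
  have hs0 : 0 ≤ 1 - κ := by linarith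
  have hs1 : 1 - κ ≤ 1 := by linarith
  have hFpos : 0 < F := by rw [hF]; positivity
  have hJpos : 0 < J := by rw [hJ]; positivity
  have hRφ1 : Rφ * (1 - Rμ) > 1 + Rμ ^ 2 := by
    nlinarith [mul_pos hRφ hμ1', sq_nonneg (1 - Rμ)]
  have e1 : θ₁ κ = (F - (C + D) + E * (1 - κ)) / F := by
    rw [hθ₁ κ]; field_simp
  have e3 : θ₃ κ = (J - (G + H) + I * (1 - κ)) / J := by
    rw [hθ₃ κ]; field_simp
  have hN1 : 0 < F - (C + D) + E * (1 - κ) := by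
    subst hC hD hE hF
    nlinarith [mul_nonneg (mul_nonneg (mul_nonneg hRφ.le hμ0.le) (by linarith : (0:ℝ) ≤ 1 + Rμ)) hs0]
  have hN3 : 0 < J - (G + H) + I * (1 - κ) := by
    subst hG hH hI hJ
    nlinarith [mul_nonneg (mul_nonneg hμ0.le hμ0.le) hs0]
  refine ⟨?_, ?_, ?_, ?_⟩
  · have hnum : B * (1 - κ) - A < 0 := by
      subst hA hB
      nlinarith [mul_pos (pow_pos hRφ 2) (show (0:ℝ) < 1 - Rμ * (1 - κ) by nlinarith)]
    have := div_neg_of_neg_of_pos hnum hFpos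
    rw [hθ₂ κ]; linarith
  · rw [e1, e3, div_lt_div_iff₀ hJpos hFpos]
    subst hA hB hC hD hE hF hG hH hI hJ
    nlinarith [mul_pos (mul_pos hRφ hμ0) hμ1', mul_pos hRφ hμ0,
      mul_nonneg (mul_nonneg (mul_pos hRφ hμ0).le hμ0.le) hs0,
      mul_pos (mul_pos hRφ hμ0) (mul_pos hRφ hμ0)]
  · rw [e1]; exact div_pos hN1 hFpos
  · rw [e3]; exact div_pos hN3 hJpos
end

section
/- Let μ, γ, φ, β, Cs, Ci, Cr be positive real numbers with Ci > Cs, let g(s,i,r) = Cs·Ci/(s·Cs + i·Ci + r·Cr), and consider the planar functions g₁(i,r) = g(1-i-r, i, r)·β·i·(1-i-r) + φ·r·i - (γ+μ)·i and g₂(i,r) = γ·i - φ·r·i - μ·r on the open region Ω = {(i,r) : i > 0, r > 0, i + r < 1}. Then at every point of Ω, ∂/∂i (g₁(i,r)/(i·r)) + ∂/∂r (g₂(i,r)/(i·r)) = (∂g/∂i - ∂g/∂s)(1-i-r, i, r)·β·(1-i-r)/r - β·g(1-i-r, i, r)/r - γ/r², and this quantity is strictly negative. -/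
/-!
Multiplying by the Dulac function `1/(i r)` cancels the factor `i` in `g₁` and turns `g₂` into
`γ/r - φ - μ/i`, so both partial derivatives are elementary; by the chain rule the `i`-derivative
of `g(1-i-r, i, r)` is `∂g/∂i - ∂g/∂s`. For this incidence function
`∂g/∂i - ∂g/∂s = -Cs Ci (Ci - Cs)/D²` with `D = s Cs + i Ci + r Cr`, which is negative since
`Ci > Cs`; the other two terms `-β g/r` and `-γ/r²` are negative as well.
-/

open Function

theorem deriv_comp_antidiagonal {f : ℝ → ℝ → ℝ} {c s i : ℝ} (hc : s + i = c)
    (hf : DifferentiableAt ℝ (uncurry f) (s, i)) :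
    deriv (fun x => f (c - x) x) i = deriv (fun x => f s x) i - deriv (fun x => f x i) s := by
  subst hc
  have hF := hf.hasFDerivAt
  set L := fderiv ℝ (uncurry f) (s, i)
  have hdiag : HasDerivAt (fun x => f (s + i - x) x) (L ((0, 1) - (1, 0))) i := by
    have hpath : HasDerivAt (fun x : ℝ => (s + i - x, x)) ((0, 1) - (1, 0) : ℝ × ℝ) i := by
      simpa using ((hasDerivAt_id i).const_sub (s + i)).prodMk (hasDerivAt_id i)
    exact hF.comp_hasDerivAt_of_eq i hpath (by simp)
  have hsnd : HasDerivAt (fun x => f s x) (L (0, 1)) i :=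
    hF.comp_hasDerivAt i ((hasDerivAt_const i s).prodMk (hasDerivAt_id' i))
  have hfst : HasDerivAt (fun x => f x i) (L (1, 0)) s :=
    hF.comp_hasDerivAt (f := fun x => (x, i)) s ((hasDerivAt_id' s).prodMk (hasDerivAt_const s i))
  rw [hdiag.deriv, hsnd.deriv, hfst.deriv, map_sub]

theorem deriv_dulac_weighted_infective {G : ℝ → ℝ} {β φ κ r i : ℝ}
    (hG : DifferentiableAt ℝ G i) (hi : i ≠ 0) (hr : r ≠ 0) :
    deriv (fun x => (G x * β * x * (1 - x - r) + φ * r * x - κ * x) / (x * r)) i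
      = deriv G i * β * ((1 - i - r) / r) - β * G i / r := by
  have hcancel : (fun x => (G x * β * x * (1 - x - r) + φ * r * x - κ * x) / (x * r))
      =ᶠ[nhds i] fun x => G x * (β * (1 - x - r) / r) + (φ - κ / r) := by
    filter_upwards [eventually_ne_nhds hi] with x hx
    field_simp
    ring
  have hlin : HasDerivAt (fun x => β * (1 - x - r) / r) (-β / r) i := by
    simpa using (((hasDerivAt_id' i).const_sub 1).sub_const r).const_mul β |>.div_const r
  rw [hcancel.deriv_eq]
  refine ((hG.hasDerivAt.mul hlin).add_const (φ - κ / r)).deriv.trans ?_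
  ring

theorem deriv_dulac_weighted_recovered {γ φ μ i r : ℝ} (hi : i ≠ 0) (hr : r ≠ 0) :
    deriv (fun x => (γ * i - φ * x * i - μ * x) / (i * x)) r = -(γ / r ^ 2) := by
  have hcancel : (fun x => (γ * i - φ * x * i - μ * x) / (i * x))
      =ᶠ[nhds r] fun x => γ * x⁻¹ - (φ + μ / i) := by
    filter_upwards [eventually_ne_nhds hr] with x hx
    field_simp
    ring
  rw [hcancel.deriv_eq, (((hasDerivAt_inv hr).const_mul γ).sub_const _).deriv]
  ring

noncomputable def incidence (Cs Ci Cr s i r : ℝ) : ℝ := Cs * Ci / (s * Cs + i * Ci + r * Cr)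

section incidence

variable {Cs Ci Cr s i r : ℝ}

theorem incidence_pos (hCs : 0 < Cs) (hCi : 0 < Ci) (hD : 0 < s * Cs + i * Ci + r * Cr) :
    0 < incidence Cs Ci Cr s i r := by
  unfold incidence; positivity

theorem hasDerivAt_incidence_fst (hD : s * Cs + i * Ci + r * Cr ≠ 0) :
    HasDerivAt (fun x => incidence Cs Ci Cr x i r)
      (-(Cs * Ci * Cs) / (s * Cs + i * Ci + r * Cr) ^ 2) s := by
  refine ((hasDerivAt_const s (Cs * Ci)).div
    (((hasDerivAt_id' s).mul_const Cs).add_const (i * Ci) |>.add_const (r * Cr)) hD).congr_deriv ?_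
  ring

theorem hasDerivAt_incidence_snd (hD : s * Cs + i * Ci + r * Cr ≠ 0) :
    HasDerivAt (fun x => incidence Cs Ci Cr s x r)
      (-(Cs * Ci * Ci) / (s * Cs + i * Ci + r * Cr) ^ 2) i := by
  refine ((hasDerivAt_const i (Cs * Ci)).div
    (((hasDerivAt_id' i).mul_const Ci).const_add (s * Cs) |>.add_const (r * Cr)) hD).congr_deriv ?_
  ring

theorem differentiableAt_uncurry_incidence (hD : s * Cs + i * Ci + r * Cr ≠ 0) :
    DifferentiableAt ℝ (uncurry fun s i => incidence Cs Ci Cr s i r) (s, i) := by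
  unfold incidence uncurry
  fun_prop (disch := exact hD)

theorem deriv_incidence_snd_sub_fst (hD : s * Cs + i * Ci + r * Cr ≠ 0) :
    deriv (fun x => incidence Cs Ci Cr s x r) i - deriv (fun x => incidence Cs Ci Cr x i r) s
      = -(Cs * Ci * (Ci - Cs)) / (s * Cs + i * Ci + r * Cr) ^ 2 := by
  rw [(hasDerivAt_incidence_snd hD).deriv, (hasDerivAt_incidence_fst hD).deriv]
  ring

end incidence

theorem dulac_divergence_neg_general
    (μ γ φ β Cs Ci Cr : ℝ)
    (hγ : 0 < γ) (hβ : 0 < β)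
    (hCs : 0 < Cs) (hCi : 0 < Ci) (hCr : 0 < Cr) (hC : Ci > Cs)
    (g : ℝ → ℝ → ℝ → ℝ)
    (hg : g = fun s i r => Cs * Ci / (s * Cs + i * Ci + r * Cr))
    (g₁ g₂ : ℝ → ℝ → ℝ)
    (hg₁ : g₁ = fun i r =>
      g (1 - i - r) i r * β * i * (1 - i - r) + φ * r * i - (γ + μ) * i)
    (hg₂ : g₂ = fun i r => γ * i - φ * r * i - μ * r)
    (i r : ℝ) (hi : 0 < i) (hr : 0 < r) (hir : i + r < 1) :
    deriv (fun i' => g₁ i' r / (i' * r)) i +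
        deriv (fun r' => g₂ i r' / (i * r')) r
      = (deriv (fun x => g (1 - i - r) x r) i -
          deriv (fun x => g x i r) (1 - i - r)) * β * ((1 - i - r) / r)
        - β * g (1 - i - r) i r / r - γ / r ^ 2 ∧
    deriv (fun i' => g₁ i' r / (i' * r)) i +
        deriv (fun r' => g₂ i r' / (i * r')) r < 0 := by
  obtain rfl : g = incidence Cs Ci Cr := hg
  subst hg₁ hg₂
  have hs : 0 < 1 - i - r := by linarith
  have hD : 0 < (1 - i - r) * Cs + i * Ci + r * Cr := by positivity
  have hdiag : deriv (fun x => incidence Cs Ci Cr (1 - x - r) x r) i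
      = deriv (fun x => incidence Cs Ci Cr (1 - i - r) x r) i
        - deriv (fun x => incidence Cs Ci Cr x i r) (1 - i - r) := by
    convert deriv_comp_antidiagonal (c := 1 - r) (by ring)
      (differentiableAt_uncurry_incidence hD.ne') using 4 with x
    ring
  have hdiff : DifferentiableAt ℝ (fun x => incidence Cs Ci Cr (1 - x - r) x r) i := by
    unfold incidence
    fun_prop (disch := exact hD.ne')
  beta_reduce
  rw [deriv_dulac_weighted_infective hdiff hi.ne' hr.ne', hdiag,
    deriv_dulac_weighted_recovered hi.ne' hr.ne']
  refine ⟨by ring, ?_⟩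
  rw [deriv_incidence_snd_sub_fst hD.ne']
  have hcross : 0 < Cs * Ci * (Ci - Cs) / ((1 - i - r) * Cs + i * Ci + r * Cr) ^ 2 * β
      * ((1 - i - r) / r) := by
    have := sub_pos.2 hC
    positivity
  have hinc : 0 < β * incidence Cs Ci Cr (1 - i - r) i r / r := by
    have := incidence_pos hCs hCi hD
    positivity
  have hrec : 0 < γ / r ^ 2 := by positivity
  rw [neg_div]
  linarith

/-- Dulac criterion computation for the planar reduction of the rescaled SIR
model with nonlinear relapse: on the region `{i > 0, r > 0, i + r < 1}`, with
`Ci > Cs`, the divergence of the vector field `(g₁, g₂)` weighted by the Dulac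
function `1/(i·r)` equals
`(∂g/∂i - ∂g/∂s)(1-i-r,i,r)·β·(1-i-r)/r - β·g(1-i-r,i,r)/r - γ/r²`,
and this quantity is strictly negative. -/
theorem dulac_divergence_neg
    (μ γ φ β Cs Ci Cr : ℝ)
    (hμ : 0 < μ) (hγ : 0 < γ) (hφ : 0 < φ) (hβ : 0 < β)
    (hCs : 0 < Cs) (hCi : 0 < Ci) (hCr : 0 < Cr) (hC : Ci > Cs)
    (g : ℝ → ℝ → ℝ → ℝ)
    (hg : g = fun s i r => Cs * Ci / (s * Cs + i * Ci + r * Cr))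
    (g₁ g₂ : ℝ → ℝ → ℝ)
    (hg₁ : g₁ = fun i r =>
      g (1 - i - r) i r * β * i * (1 - i - r) + φ * r * i - (γ + μ) * i)
    (hg₂ : g₂ = fun i r => γ * i - φ * r * i - μ * r)
    (i r : ℝ) (hi : 0 < i) (hr : 0 < r) (hir : i + r < 1) :
    deriv (fun i' => g₁ i' r / (i' * r)) i +
        deriv (fun r' => g₂ i r' / (i * r')) r
      = (deriv (fun x => g (1 - i - r) x r) i -
          deriv (fun x => g x i r) (1 - i - r)) * β * ((1 - i - r) / r)
        - β * g (1 - i - r) i r / r - γ / r ^ 2 ∧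
    deriv (fun i' => g₁ i' r / (i' * r)) i +
        deriv (fun r' => g₂ i r' / (i * r')) r < 0 :=
  dulac_divergence_neg_general μ γ φ β Cs Ci Cr hγ hβ hCs hCi hCr hC g hg g₁ g₂ hg₁ hg₂ i r hi hr
    hir
end

section
/- Let μ, γ, φ, β, Cs, Ci, Cr be positive real numbers with Ci > Cs, let g(s,i,r) = Cs·Ci/(s·Cs + i·Ci + r·Cr), and consider the planar system di/dt = g(1-i-r, i, r)·β·i·(1-i-r) + φ·r·i - (γ+μ)·i, dr/dt = γ·i - φ·r·i - μ·r. Then this system has no nonconstant periodic solution contained in the region {(i,r) ∈ ℝ² : i > 0, r > 0, i + r < 1}: if x : ℝ → ℝ² is differentiable, satisfies x'(t) = (g₁(x(t)), g₂(x(t))) for all t, takes values in the region, and is periodic with some period T > 0, then x is constant. -/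
/-!
Write `G i r := lyapunovRate i r` and `i* r := rNullcline r`, so that `r' = (γ - φ r)(i - i* r)`.
Along a solution, `h = (γ - φ r) i - μ r log i + W r` with `W' = -G (i* r) r` satisfies
`h' = (γ - φ r)(i - i* r)(G i r - G (i* r) r)`. Since `Ci > Cs`, `G` is strictly decreasing in `i`,
and `γ > φ r` along a periodic orbit (look at the maximum of `r`), so `h' ≤ 0` with equality only
on the nullcline `i = i* r`. A periodic `h` that never increases is constant, so the orbit lies on
the nullcline; there `r' = 0`, so `r` and then `i = i* r` are constant.
-/

open Real Set Function

theorem Function.Periodic.exists_forall_le_of_continuous {f : ℝ → ℝ} {c : ℝ}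
    (hp : Periodic f c) (hc : c ≠ 0) (hf : Continuous f) : ∃ t₀, ∀ t, f t ≤ f t₀ := by
  obtain ⟨_, ⟨t₀, rfl⟩, hmax⟩ :=
    (hp.compact_of_continuous hc hf).exists_isGreatest (range_nonempty f)
  exact ⟨t₀, fun t => hmax ⟨t, rfl⟩⟩

theorem Antitone.eq_of_periodic {α : Type*} [PartialOrder α] {f : ℝ → α} {c : ℝ}
    (hf : Antitone f) (hp : Periodic f c) (hc : 0 < c) (s u : ℝ) : f s = f u := by
  wlog hsu : s ≤ u generalizing s u
  · exact (this u s (le_of_not_ge hsu)).symm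
  obtain ⟨n, hn⟩ := exists_nat_ge ((u - s) / c)
  have hu : u ≤ s + n * c := by
    have := (div_le_iff₀ hc).1 hn
    linarith
  refine le_antisymm ?_ (hf hsu)
  calc f s = f (s + n * c) := ((hp.nat_mul n) s).symm
    _ ≤ f u := hf hu

theorem StrictAntiOn.sub_mul_sub_neg {α : Type*} [Ring α] [LinearOrder α] [IsStrictOrderedRing α]
    {f : α → α} {s : Set α} (hf : StrictAntiOn f s) {a b : α} (ha : a ∈ s) (hb : b ∈ s)
    (hab : a ≠ b) : (a - b) * (f a - f b) < 0 := by
  rcases hab.lt_or_gt with hlt | hlt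
  · exact mul_neg_of_neg_of_pos (sub_neg.2 hlt) (sub_pos.2 (hf ha hb hlt))
  · exact mul_neg_of_pos_of_neg (sub_pos.2 hlt) (sub_neg.2 (hf hb ha hlt))

theorem ContinuousOn.exists_forall_hasDerivAt {E : Type*} [NormedAddCommGroup E]
    [NormedSpace ℝ E] [CompleteSpace E] {f : ℝ → E} {s : Set ℝ} (hf : ContinuousOn f s)
    (hs : IsOpen s) (hs' : s.OrdConnected) : ∃ F : ℝ → E, ∀ x ∈ s, HasDerivAt F (f x) x := by
  rcases s.eq_empty_or_nonempty with rfl | ⟨c, hc⟩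
  · exact ⟨0, fun x hx => hx.elim⟩
  refine ⟨fun x => ∫ y in c..x, f y, fun x hx => ?_⟩
  exact intervalIntegral.integral_hasDerivAt_right
    ((hf.mono (hs'.uIcc_subset hc hx)).intervalIntegrable)
    (hf.stronglyMeasurableAtFilter hs x hx) (hf.continuousAt (hs.mem_nhds hx))

theorem hasDerivAt_lyapunov {i r W : ℝ → ℝ} {F w γ φ μ t : ℝ}
    (hi : HasDerivAt i (i t * F) t) (hr : HasDerivAt r (γ * i t - φ * r t * i t - μ * r t) t)
    (hW : HasDerivAt W w (r t)) (hi0 : 0 < i t) :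
    HasDerivAt (fun u => (γ - φ * r u) * i u - μ * r u * log (i u) + W (r u))
      ((γ * i t - φ * r t * i t - μ * r t) * (F - φ * i t - μ * log (i t) + w)) t := by
  have hlog := hi.log hi0.ne'
  refine ((((hr.const_mul φ).const_sub γ).mul hi).sub ((hr.const_mul μ).mul hlog)
    |>.add (hW.comp t hr)).congr_deriv ?_
  field_simp
  ring

namespace SIRRelapse

noncomputable section

variable (μ γ φ β Cs Ci Cr : ℝ)

def infectionRate (i r : ℝ) : ℝ :=
  Cs * Ci / ((1 - i - r) * Cs + i * Ci + r * Cr) * β * (1 - i - r)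

def lyapunovRate (i r : ℝ) : ℝ :=
  infectionRate β Cs Ci Cr i r + φ * r - (γ + μ) - φ * i - μ * log i

def rNullcline (r : ℝ) : ℝ := μ * r / (γ - φ * r)

variable {μ γ φ β Cs Ci Cr}

theorem incidence_denom_pos (hCs : 0 < Cs) (hC : Cs < Ci) (hCr : 0 ≤ Cr) {i r : ℝ} (hi : 0 < i)
    (hr0 : 0 ≤ r) (hr1 : r < 1) : 0 < (1 - i - r) * Cs + i * Ci + r * Cr := by
  nlinarith [mul_pos (sub_pos.2 hr1) hCs, mul_pos hi (sub_pos.2 hC), mul_nonneg hr0 hCr]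

theorem infectionRate_antitoneOn (hβ : 0 ≤ β) (hCs : 0 < Cs) (hC : Cs < Ci) (hCr : 0 ≤ Cr)
    {r : ℝ} (hr0 : 0 ≤ r) (hr1 : r < 1) :
    AntitoneOn (fun i => infectionRate β Cs Ci Cr i r) (Ioi 0) := by
  intro a ha b hb hab
  have hDa := incidence_denom_pos hCs hC hCr ha hr0 hr1
  have hDb := incidence_denom_pos hCs hC hCr hb hr0 hr1
  have hcross : (1 - b - r) * ((1 - a - r) * Cs + a * Ci + r * Cr)
      ≤ (1 - a - r) * ((1 - b - r) * Cs + b * Ci + r * Cr) := by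
    -- the difference of the two sides is `(a - b) * ((1 - r) * Ci + r * Cr)`
    nlinarith [mul_nonneg (sub_nonneg.2 hab) (add_nonneg (mul_nonneg (sub_nonneg.2 hr1.le)
      (hCs.trans hC).le) (mul_nonneg hr0 hCr))]
  have hquot : (1 - b - r) / ((1 - b - r) * Cs + b * Ci + r * Cr)
      ≤ (1 - a - r) / ((1 - a - r) * Cs + a * Ci + r * Cr) := by
    rw [div_le_div_iff₀ hDb hDa]
    linarith
  have hK : 0 ≤ Cs * Ci * β := by have := hCs.trans hC; positivity
  calc infectionRate β Cs Ci Cr b r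
      = Cs * Ci * β * ((1 - b - r) / ((1 - b - r) * Cs + b * Ci + r * Cr)) := by
        unfold infectionRate; ring
    _ ≤ Cs * Ci * β * ((1 - a - r) / ((1 - a - r) * Cs + a * Ci + r * Cr)) :=
        mul_le_mul_of_nonneg_left hquot hK
    _ = infectionRate β Cs Ci Cr a r := by unfold infectionRate; ring

theorem lyapunovRate_strictAntiOn (hμ : 0 < μ) (hφ : 0 ≤ φ) (hβ : 0 ≤ β) (hCs : 0 < Cs)
    (hC : Cs < Ci) (hCr : 0 ≤ Cr) {r : ℝ} (hr0 : 0 ≤ r) (hr1 : r < 1) :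
    StrictAntiOn (fun i => lyapunovRate μ γ φ β Cs Ci Cr i r) (Ioi 0) := by
  intro a ha b hb hab
  have hκ := infectionRate_antitoneOn hβ hCs hC hCr hr0 hr1 ha hb hab.le
  have hlog := mul_lt_mul_of_pos_left (log_lt_log ha hab) hμ
  have hlin := mul_le_mul_of_nonneg_left hab.le hφ
  simp only [lyapunovRate] at hκ ⊢
  linarith

theorem rNullcline_pos (hμ : 0 < μ) {r : ℝ} (hr : 0 < r) (hγr : φ * r < γ) :
    0 < rNullcline μ γ φ r :=
  div_pos (mul_pos hμ hr) (sub_pos.2 hγr)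

theorem sub_eq_mul_sub_rNullcline {i r : ℝ} (hγr : φ * r < γ) :
    γ * i - φ * r * i - μ * r = (γ - φ * r) * (i - rNullcline μ γ φ r) := by
  have := (sub_pos.2 hγr).ne'
  unfold rNullcline
  field_simp

theorem mul_lyapunovRate_sub_neg (hμ : 0 < μ) (hφ : 0 ≤ φ) (hβ : 0 ≤ β) (hCs : 0 < Cs)
    (hC : Cs < Ci) (hCr : 0 ≤ Cr) {i r : ℝ} (hi : 0 < i) (hr0 : 0 < r) (hr1 : r < 1)
    (hγr : φ * r < γ) (hne : i ≠ rNullcline μ γ φ r) :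
    (γ * i - φ * r * i - μ * r) *
      (lyapunovRate μ γ φ β Cs Ci Cr i r
        - lyapunovRate μ γ φ β Cs Ci Cr (rNullcline μ γ φ r) r) < 0 := by
  rw [sub_eq_mul_sub_rNullcline hγr, mul_assoc]
  exact mul_neg_of_pos_of_neg (sub_pos.2 hγr)
    ((lyapunovRate_strictAntiOn hμ hφ hβ hCs hC hCr hr0.le hr1).sub_mul_sub_neg hi
      (rNullcline_pos hμ hr0 hγr) hne)

theorem mem_Ioo_min_div_iff (hφ : 0 < φ) {r : ℝ} :
    r ∈ Ioo 0 (min 1 (γ / φ)) ↔ 0 < r ∧ r < 1 ∧ φ * r < γ := by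
  rw [mem_Ioo, lt_min_iff, lt_div_iff₀ hφ, mul_comm r]

theorem continuousOn_lyapunovRate_rNullcline (hμ : 0 < μ) (hφ : 0 < φ) (hCs : 0 < Cs)
    (hC : Cs < Ci) (hCr : 0 ≤ Cr) :
    ContinuousOn (fun r => lyapunovRate μ γ φ β Cs Ci Cr (rNullcline μ γ φ r) r)
      (Ioo 0 (min 1 (γ / φ))) := by
  intro r hr
  obtain ⟨hr0, hr1, hγr⟩ := (mem_Ioo_min_div_iff hφ).1 hr
  have hγr' : γ - φ * r ≠ 0 := (sub_pos.2 hγr).ne'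
  have hpos := rNullcline_pos hμ hr0 hγr
  have hne : μ * r / (γ - φ * r) ≠ 0 := hpos.ne'
  have hD : (1 - μ * r / (γ - φ * r) - r) * Cs + μ * r / (γ - φ * r) * Ci + r * Cr ≠ 0 :=
    (incidence_denom_pos hCs hC hCr hpos hr0.le hr1).ne'
  apply ContinuousAt.continuousWithinAt
  simp only [lyapunovRate, infectionRate, rNullcline]
  fun_prop (disch := assumption)

theorem mul_lt_of_periodic_solution {i r : ℝ → ℝ} {T : ℝ} (hμ : 0 < μ) (hφ : 0 ≤ φ)
    (hr : ∀ t, HasDerivAt r (γ * i t - φ * r t * i t - μ * r t) t)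
    (hi0 : ∀ t, 0 < i t) (hr0 : ∀ t, 0 < r t) (hrp : Periodic r T) (hT : T ≠ 0) (t : ℝ) :
    φ * r t < γ := by
  obtain ⟨t₀, ht₀⟩ := hrp.exists_forall_le_of_continuous hT
    (continuous_iff_continuousAt.2 fun t => (hr t).continuousAt)
  -- `r' = 0` at the maximum of `r`, where it reads `γ i = φ r i + μ r > φ r i`.
  have hmax : IsLocalMax r t₀ := Filter.Eventually.of_forall ht₀
  have hcrit := hmax.hasDerivAt_eq_zero (hr t₀)
  have hγ : φ * r t₀ < γ := by
    by_contra! h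
    nlinarith [mul_le_mul_of_nonneg_right h (hi0 t₀).le, mul_pos hμ (hr0 t₀)]
  linarith [mul_le_mul_of_nonneg_left (ht₀ t) hφ]

theorem eq_rNullcline_of_periodic {i r : ℝ → ℝ} {T : ℝ} (hμ : 0 < μ) (hφ : 0 < φ)
    (hβ : 0 ≤ β) (hCs : 0 < Cs) (hC : Cs < Ci) (hCr : 0 ≤ Cr)
    (hi : ∀ t, HasDerivAt i (i t * (infectionRate β Cs Ci Cr (i t) (r t) + φ * r t - (γ + μ))) t)
    (hr : ∀ t, HasDerivAt r (γ * i t - φ * r t * i t - μ * r t) t)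
    (hreg : ∀ t, 0 < i t ∧ 0 < r t ∧ i t + r t < 1)
    (hT : 0 < T) (hip : Periodic i T) (hrp : Periodic r T) (t : ℝ) :
    i t = rNullcline μ γ φ (r t) := by
  have hi0 t := (hreg t).1
  have hr0 t := (hreg t).2.1
  have hγr := mul_lt_of_periodic_solution hμ hφ.le hr hi0 hr0 hrp hT.ne'
  have hrU t : r t ∈ Ioo 0 (min 1 (γ / φ)) :=
    (mem_Ioo_min_div_iff hφ).2 ⟨hr0 t, by linarith [hreg t], hγr t⟩
  obtain ⟨W, hW⟩ := (continuousOn_lyapunovRate_rNullcline (β := β) hμ hφ hCs hC hCr).neg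
    |>.exists_forall_hasDerivAt isOpen_Ioo ordConnected_Ioo
  set h := fun u => (γ - φ * r u) * i u - μ * r u * log (i u) + W (r u)
  have hh t : HasDerivAt h ((γ * i t - φ * r t * i t - μ * r t) *
      (lyapunovRate μ γ φ β Cs Ci Cr (i t) (r t)
        - lyapunovRate μ γ φ β Cs Ci Cr (rNullcline μ γ φ (r t)) (r t))) t := by
    refine (hasDerivAt_lyapunov (hi t) (hr t) (hW _ (hrU t)) (hi0 t)).congr_deriv ?_
    simp only [Pi.neg_apply, lyapunovRate]
    ring
  have hh_nonpos t : deriv h t ≤ 0 := by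
    rw [(hh t).deriv]
    by_cases hne : i t = rNullcline μ γ φ (r t)
    · rw [hne, sub_self, mul_zero]
    · exact (mul_lyapunovRate_sub_neg hμ hφ.le hβ hCs hC hCr (hi0 t) (hr0 t)
        (by linarith [hreg t]) (hγr t) hne).le
  have hconst u : h u = h 0 :=
    (antitone_of_deriv_nonpos (fun t => (hh t).differentiableAt) hh_nonpos).eq_of_periodic
      (fun u => by simp only [h, hip u, hrp u]) hT u 0
  by_contra hne
  have h0 := (hh t).unique
    ((hasDerivAt_const t (h 0)).congr_of_eventuallyEq (Filter.Eventually.of_forall hconst))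
  exact (mul_lyapunovRate_sub_neg hμ hφ.le hβ hCs hC hCr (hi0 t) (hr0 t)
    (by linarith [hreg t]) (hγr t) hne).ne h0

theorem eq_of_periodic {i r : ℝ → ℝ} {T : ℝ} (hμ : 0 < μ) (hφ : 0 < φ)
    (hβ : 0 ≤ β) (hCs : 0 < Cs) (hC : Cs < Ci) (hCr : 0 ≤ Cr)
    (hi : ∀ t, HasDerivAt i (i t * (infectionRate β Cs Ci Cr (i t) (r t) + φ * r t - (γ + μ))) t)
    (hr : ∀ t, HasDerivAt r (γ * i t - φ * r t * i t - μ * r t) t)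
    (hreg : ∀ t, 0 < i t ∧ 0 < r t ∧ i t + r t < 1)
    (hT : 0 < T) (hip : Periodic i T) (hrp : Periodic r T) (t t' : ℝ) :
    i t = i t' ∧ r t = r t' := by
  have hnull := eq_rNullcline_of_periodic hμ hφ hβ hCs hC hCr hi hr hreg hT hip hrp
  have hγr := mul_lt_of_periodic_solution hμ hφ.le hr (fun t => (hreg t).1) (fun t => (hreg t).2.1)
    hrp hT.ne'
  have hrconst : r t = r t' :=
    is_const_of_deriv_eq_zero (fun t => (hr t).differentiableAt) (fun t => by
      rw [(hr t).deriv, sub_eq_mul_sub_rNullcline (hγr t), hnull t, sub_self, mul_zero]) t t'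
  exact ⟨by rw [hnull, hnull, hrconst], hrconst⟩

end

end SIRRelapse

theorem no_periodic_orbits_general
    (μ γ φ β Cs Ci Cr : ℝ)
    (hμ : 0 < μ) (hφ : 0 < φ) (hβ : 0 < β)
    (hCs : 0 < Cs) (hCr : 0 < Cr) (hC : Ci > Cs)
    (g : ℝ → ℝ → ℝ → ℝ)
    (hg : g = fun s i r => Cs * Ci / (s * Cs + i * Ci + r * Cr))
    (g₁ g₂ : ℝ → ℝ → ℝ)
    (hg₁ : g₁ = fun i r =>
      g (1 - i - r) i r * β * i * (1 - i - r) + φ * r * i - (γ + μ) * i)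
    (hg₂ : g₂ = fun i r => γ * i - φ * r * i - μ * r)
    (x : ℝ → ℝ × ℝ)
    (hode : ∀ t : ℝ, HasDerivAt x
      (g₁ (x t).1 (x t).2, g₂ (x t).1 (x t).2) t)
    (hregion : ∀ t : ℝ,
      0 < (x t).1 ∧ 0 < (x t).2 ∧ (x t).1 + (x t).2 < 1)
    (T : ℝ) (hT : 0 < T)
    (hper : ∀ t : ℝ, x (t + T) = x t) :
    ∀ t t' : ℝ, x t = x t' := by
  have hi t : HasDerivAt (fun u => (x u).1) (g₁ (x t).1 (x t).2) t := (hode t).fst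
  have hr t : HasDerivAt (fun u => (x u).2) (g₂ (x t).1 (x t).2) t := (hode t).snd
  subst hg hg₁ hg₂
  intro t t'
  have hconst := SIRRelapse.eq_of_periodic hμ hφ hβ.le hCs hC hCr.le
    (fun t => (hi t).congr_deriv (by unfold SIRRelapse.infectionRate; ring)) hr hregion hT
    (fun t => congrArg Prod.fst (hper t)) (fun t => congrArg Prod.snd (hper t)) t t'
  exact Prod.ext hconst.1 hconst.2

/-- No limit cycles for the planar reduction of the rescaled SIR model with
nonlinear relapse when `Ci > Cs`: every periodic solution contained in the
region `{(i,r) : i > 0, r > 0, i + r < 1}` is constant. -/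
theorem no_periodic_orbits
    (μ γ φ β Cs Ci Cr : ℝ)
    (hμ : 0 < μ) (hγ : 0 < γ) (hφ : 0 < φ) (hβ : 0 < β)
    (hCs : 0 < Cs) (hCi : 0 < Ci) (hCr : 0 < Cr) (hC : Ci > Cs)
    (g : ℝ → ℝ → ℝ → ℝ)
    (hg : g = fun s i r => Cs * Ci / (s * Cs + i * Ci + r * Cr))
    (g₁ g₂ : ℝ → ℝ → ℝ)
    (hg₁ : g₁ = fun i r =>
      g (1 - i - r) i r * β * i * (1 - i - r) + φ * r * i - (γ + μ) * i)
    (hg₂ : g₂ = fun i r => γ * i - φ * r * i - μ * r)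
    (x : ℝ → ℝ × ℝ)
    (hdiff : Differentiable ℝ x)
    (hode : ∀ t : ℝ, HasDerivAt x
      (g₁ (x t).1 (x t).2, g₂ (x t).1 (x t).2) t)
    (hregion : ∀ t : ℝ,
      0 < (x t).1 ∧ 0 < (x t).2 ∧ (x t).1 + (x t).2 < 1)
    (T : ℝ) (hT : 0 < T)
    (hper : ∀ t : ℝ, x (t + T) = x t) :
    ∀ t t' : ℝ, x t = x t' :=
  no_periodic_orbits_general μ γ φ β Cs Ci Cr hμ hφ hβ hCs hCr hC g hg g₁ g₂ hg₁ hg₂ x hode hregion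
    T hT hper
end
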